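/- Under the permutation null, Cov(W_1(t), D_2(t)) = 0 for two symmetric kernels K_1 and K_2, where W_1(t) = (t/n)α_1(t) + ((n-t)/n)β_1(t) and D_2(t) = (t(t-1)/(n(n-1)))α_2(t) − ((n-t)(n-t-1)/(n(n-1)))β_2(t). -/

import Mathlib

/-!
Write `S_A(π)` for the sum of `K(π i, π j)` over ordered pairs of distinct positions `i, j ∈ A`,
and let `B = Aᶜ`, with `A` the first `t` positions. Then `W₁ = (S_A/(t-1) + S_B/(n-t-1))/n`, and
since `2(S_A - S_B) = ∑ₖ ±(off-diagonal row plus column sum of K₂ at π k)`, `D₂` is a linear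
permutation statistic `∑ₖ gₖ(π k)`. So it suffices that `W₁` is uncorrelated with every `g(π k)`.

By exchangeability, `Cov(K(π i, π j), g(π k))` is a constant `Q` on triples of distinct positions,
and its values with `i = k` and with `j = k` add up to a constant `P`. Counting pairs,
`Cov(S_A, g(π k))` is `(|A|-1)(P + (|A|-2)Q)` if `k ∈ A` and `|A|(|A|-1)Q` otherwise. For `A` the
set of all positions `S_A` is constant, which forces `P + (n-2)Q = 0`, and then the contributions
of `S_A` and `S_B` to `Cov(W₁, g(π k))` cancel.
-/

open Finset

/-- Expectation under the uniform permutation null distribution. -/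
noncomputable def permExp (n : ℕ) (f : Equiv.Perm (Fin n) → ℝ) : ℝ :=
  (∑ π : Equiv.Perm (Fin n), f π) / (Fintype.card (Equiv.Perm (Fin n)) : ℝ)

/-- Within-segment ordered-pair kernel average. -/
noncomputable def alphaStat (n t : ℕ) (K : Fin n → Fin n → ℝ)
    (π : Equiv.Perm (Fin n)) : ℝ :=
  (1 / ((t : ℝ) * ((t : ℝ) - 1))) *
    ∑ i : Fin n, ∑ j : Fin n,
      if i ≠ j ∧ (i : ℕ) < t ∧ (j : ℕ) < t then K (π i) (π j) else 0

/-- After-segment ordered-pair kernel average. -/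
noncomputable def betaStat (n t : ℕ) (K : Fin n → Fin n → ℝ)
    (π : Equiv.Perm (Fin n)) : ℝ :=
  (1 / (((n : ℝ) - t) * ((n : ℝ) - t - 1))) *
    ∑ i : Fin n, ∑ j : Fin n,
      if i ≠ j ∧ t ≤ (i : ℕ) ∧ t ≤ (j : ℕ) then K (π i) (π j) else 0

/-- The statistic `W(t)`. -/
noncomputable def Wstat (n t : ℕ) (K : Fin n → Fin n → ℝ)
    (π : Equiv.Perm (Fin n)) : ℝ :=
  ((t : ℝ) / n) * alphaStat n t K π + (((n : ℝ) - t) / n) * betaStat n t K π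

/-- The statistic `D(t)`. -/
noncomputable def Dstat (n t : ℕ) (K : Fin n → Fin n → ℝ)
    (π : Equiv.Perm (Fin n)) : ℝ :=
  (((t : ℝ) * ((t : ℝ) - 1)) / ((n : ℝ) * ((n : ℝ) - 1))) * alphaStat n t K π
    - ((((n : ℝ) - t) * ((n : ℝ) - t - 1)) / ((n : ℝ) * ((n : ℝ) - 1)))
        * betaStat n t K π

theorem sum_sum_erase_eq_of_pattern {α : Type*} [DecidableEq α] (c : α → α → ℝ) {k : α}
    {P₁ P₂ Q : ℝ} (h₁ : ∀ j ≠ k, c k j = P₁) (h₂ : ∀ i ≠ k, c i k = P₂)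
    (hQ : ∀ i j, i ≠ j → i ≠ k → j ≠ k → c i j = Q) (S : Finset α) :
    ∑ i ∈ S, ∑ j ∈ S.erase i, c i j
      = if k ∈ S then (#S - 1) * (P₁ + P₂ + (#S - 2) * Q) else #S * (#S - 1) * Q := by
  have hrow : ∀ i ≠ k, ∀ T : Finset α, i ∉ T → k ∉ T → ∑ j ∈ T, c i j = #T * Q := by
    intro i hik T hi hk
    rw [sum_congr rfl fun j hj => hQ i j (ne_of_mem_of_not_mem hj hi).symm hik
      (ne_of_mem_of_not_mem hj hk), sum_const, nsmul_eq_mul]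
  split_ifs with hk
  · have hrow' : ∀ i ∈ S.erase k, ∑ j ∈ S.erase i, c i j = P₂ + (#S - 2) * Q := by
      intro i hi
      have hik := ne_of_mem_erase hi
      have hiS := mem_of_mem_erase hi
      rw [← add_sum_erase _ _ (mem_erase.2 ⟨hik.symm, hk⟩), h₂ i hik,
        hrow i hik _ (fun h => by simp at h) (fun h => by simp at h),
        cast_card_erase_of_mem (mem_erase.2 ⟨hik.symm, hk⟩), cast_card_erase_of_mem hiS]
      ring
    rw [← add_sum_erase _ _ hk, sum_congr rfl hrow',
      sum_congr rfl fun j hj => h₁ j (ne_of_mem_erase hj), sum_const, sum_const, nsmul_eq_mul,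
      nsmul_eq_mul, cast_card_erase_of_mem hk]
    ring
  · rw [sum_congr rfl fun i hi => by
        rw [hrow i (ne_of_mem_of_not_mem hi hk) _ (fun h => by simp at h)
          (fun h => hk (mem_of_mem_erase h)), cast_card_erase_of_mem hi],
      sum_const, nsmul_eq_mul]
    ring

theorem sum_sum_erase_eq_sum_sum_ite {α : Type*} [Fintype α] [DecidableEq α] (S : Finset α)
    (f : α → α → ℝ) :
    ∑ i ∈ S, ∑ j ∈ S.erase i, f i j = ∑ i, ∑ j, if i ≠ j ∧ i ∈ S ∧ j ∈ S then f i j else 0 := by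
  have h : ∀ i j, (i ≠ j ∧ i ∈ S ∧ j ∈ S) ↔ (i ∈ S ∧ j ∈ S.erase i) := by grind
  simp_rw [h, ite_and, sum_ite_irrel, sum_const_zero, sum_ite_mem, univ_inter]

section

variable {n : ℕ}

noncomputable def permCov (n : ℕ) (f g : Equiv.Perm (Fin n) → ℝ) : ℝ :=
  permExp n (fun π => f π * g π) - permExp n f * permExp n g

theorem permExp_const (c : ℝ) : permExp n (fun _ => c) = c := by
  have : (Fintype.card (Equiv.Perm (Fin n)) : ℝ) ≠ 0 := Nat.cast_ne_zero.2 Fintype.card_ne_zero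
  simp [permExp, card_univ, this]

theorem permExp_add (f g : Equiv.Perm (Fin n) → ℝ) :
    permExp n (fun π => f π + g π) = permExp n f + permExp n g := by
  simp only [permExp, sum_add_distrib, add_div]

theorem permExp_const_mul (c : ℝ) (f : Equiv.Perm (Fin n) → ℝ) :
    permExp n (fun π => c * f π) = c * permExp n f := by
  simp only [permExp, ← mul_sum, mul_div_assoc]

theorem permExp_sum {ι : Type*} (s : Finset ι) (f : ι → Equiv.Perm (Fin n) → ℝ) :
    permExp n (fun π => ∑ i ∈ s, f i π) = ∑ i ∈ s, permExp n (f i) := by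
  simp only [permExp, sum_comm (s := s), sum_div]

theorem permExp_comp_mul_right (σ : Equiv.Perm (Fin n)) (f : Equiv.Perm (Fin n) → ℝ) :
    permExp n (fun π => f (π * σ)) = permExp n f := by
  rw [permExp, permExp]
  congr 1
  exact Equiv.sum_comp (Equiv.mulRight σ) f

theorem permCov_const_left (c : ℝ) (g : Equiv.Perm (Fin n) → ℝ) :
    permCov n (fun _ => c) g = 0 := by
  rw [permCov, permExp_const_mul, permExp_const, sub_self]

theorem permCov_add_left (f₁ f₂ g : Equiv.Perm (Fin n) → ℝ) :
    permCov n (fun π => f₁ π + f₂ π) g = permCov n f₁ g + permCov n f₂ g := by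
  simp only [permCov, add_mul, permExp_add]
  ring

theorem permCov_const_mul_left (c : ℝ) (f g : Equiv.Perm (Fin n) → ℝ) :
    permCov n (fun π => c * f π) g = c * permCov n f g := by
  simp only [permCov, mul_assoc, permExp_const_mul]
  ring

theorem permCov_sum_left {ι : Type*} (s : Finset ι) (f : ι → Equiv.Perm (Fin n) → ℝ)
    (g : Equiv.Perm (Fin n) → ℝ) :
    permCov n (fun π => ∑ i ∈ s, f i π) g = ∑ i ∈ s, permCov n (f i) g := by
  simp only [permCov, sum_mul, permExp_sum, sum_sub_distrib]

theorem permCov_sum_right {ι : Type*} (s : Finset ι) (f : Equiv.Perm (Fin n) → ℝ)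
    (g : ι → Equiv.Perm (Fin n) → ℝ) :
    permCov n f (fun π => ∑ i ∈ s, g i π) = ∑ i ∈ s, permCov n f (g i) := by
  simp only [permCov, mul_sum, permExp_sum, sum_sub_distrib]

theorem permCov_comp_mul_right (σ : Equiv.Perm (Fin n)) (f g : Equiv.Perm (Fin n) → ℝ) :
    permCov n (fun π => f (π * σ)) (fun π => g (π * σ)) = permCov n f g := by
  simp only [permCov]
  rw [permExp_comp_mul_right σ (fun π => f π * g π), permExp_comp_mul_right,
    permExp_comp_mul_right]

theorem permCov_comp_eq_of_injective {m : ℕ} (F G : (Fin m → Fin n) → ℝ)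
    {x y : Fin m → Fin n} (hx : x.Injective) (hy : y.Injective) :
    permCov n (fun π => F (π ∘ x)) (fun π => G (π ∘ x))
      = permCov n (fun π => F (π ∘ y)) (fun π => G (π ∘ y)) := by
  obtain ⟨σ, hσ⟩ := Equiv.Perm.exists_extending_pair x y hx hy
  have hy' : ∀ π : Equiv.Perm (Fin n), π ∘ y = (π * σ) ∘ x := fun π => by
    funext a; simp [hσ]
  simp only [hy']
  exact (permCov_comp_mul_right σ (fun π => F (π ∘ x)) (fun π => G (π ∘ x))).symm

noncomputable def pairSum (K : Fin n → Fin n → ℝ) (S : Finset (Fin n))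
    (π : Equiv.Perm (Fin n)) : ℝ :=
  ∑ i ∈ S, ∑ j ∈ S.erase i, K (π i) (π j)

noncomputable def symRowSum (K : Fin n → Fin n → ℝ) (a : Fin n) : ℝ :=
  ∑ b, if a ≠ b then K a b + K b a else 0

theorem pairSum_univ (K : Fin n → Fin n → ℝ) (π : Equiv.Perm (Fin n)) :
    pairSum K univ π = ∑ a, ∑ b, if a ≠ b then K a b else 0 := by
  simp only [pairSum, sum_sum_erase_eq_sum_sum_ite, mem_univ, and_true]
  exact Fintype.sum_equiv π _ _ fun i => Fintype.sum_equiv π _ _ fun j => by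
    simp [π.injective.ne_iff]

theorem two_mul_sub_pairSum_compl (K : Fin n → Fin n → ℝ) (S : Finset (Fin n))
    (π : Equiv.Perm (Fin n)) :
    2 * (pairSum K S π - pairSum K Sᶜ π)
      = ∑ k, (if k ∈ S then 1 else -1) * symRowSum K (π k) := by
  set s : Fin n → ℝ := fun k => if k ∈ S then 1 else -1
  have hrow : ∀ k, symRowSum K (π k)
      = ∑ j, if k ≠ j then K (π k) (π j) + K (π j) (π k) else 0 := fun k => by
    rw [symRowSum]
    exact (Fintype.sum_equiv π _ _ fun j => by simp [π.injective.ne_iff]).symm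
  simp only [hrow, mul_sum, mul_ite, mul_add, mul_zero, ite_add_zero, sum_add_distrib]
  rw [sum_comm (f := fun k j => if k ≠ j then s k * K (π j) (π k) else 0), pairSum, pairSum,
    sum_sum_erase_eq_sum_sum_ite, sum_sum_erase_eq_sum_sum_ite, ← sum_sub_distrib, mul_sum,
    ← sum_add_distrib]
  refine sum_congr rfl fun i _ => ?_
  rw [← sum_sub_distrib, mul_sum, ← sum_add_distrib]
  refine sum_congr rfl fun j _ => ?_
  by_cases hij : i = j
  · simp [hij]
  · by_cases hi : i ∈ S <;> by_cases hj : j ∈ S <;> simp [s, hij, Ne.symm hij, hi, hj] <;> ring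

theorem exists_permCov_pairSum_eval (K : Fin n → Fin n → ℝ) (g : Fin n → ℝ) (k : Fin n)
    (hn : 2 < n) :
    ∃ P Q : ℝ, ∀ S : Finset (Fin n), permCov n (pairSum K S) (fun π => g (π k))
      = if k ∈ S then (#S - 1) * (P + (#S - 2) * Q) else #S * (#S - 1) * Q := by
  obtain ⟨a, ha, b, hb, hab⟩ : ∃ a ∈ univ.erase k, ∃ b ∈ univ.erase k, a ≠ b := by
    refine one_lt_card.1 ?_
    rw [card_erase_of_mem (mem_univ k), card_univ, Fintype.card_fin]
    omega
  replace ha := ne_of_mem_erase ha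
  replace hb := ne_of_mem_erase hb
  set c : Fin n → Fin n → ℝ := fun i j => permCov n (fun π => K (π i) (π j)) (fun π => g (π k))
  have h₁ : ∀ j ≠ k, c k j = c k a := fun j hj =>
    permCov_comp_eq_of_injective (fun v => K (v 0) (v 1)) (fun v => g (v 0))
      (x := ![k, j]) (y := ![k, a]) (injective_pair_iff_ne.2 hj.symm)
      (injective_pair_iff_ne.2 ha.symm)
  have h₂ : ∀ i ≠ k, c i k = c a k := fun i hi =>
    permCov_comp_eq_of_injective (fun v => K (v 0) (v 1)) (fun v => g (v 1))
      (x := ![i, k]) (y := ![a, k]) (injective_pair_iff_ne.2 hi) (injective_pair_iff_ne.2 ha)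
  have hQ : ∀ i j, i ≠ j → i ≠ k → j ≠ k → c i j = c a b := fun i j hij hik hjk =>
    permCov_comp_eq_of_injective (fun v => K (v 0) (v 1)) (fun v => g (v 2))
      (x := ![i, j, k]) (y := ![a, b, k])
      (Fin.cons_injective_iff.2 ⟨by simp [hij, hik], injective_pair_iff_ne.2 hjk⟩)
      (Fin.cons_injective_iff.2 ⟨by simp [hab, ha], injective_pair_iff_ne.2 hb⟩)
  refine ⟨c k a + c a k, c a b, fun S => ?_⟩
  rw [← sum_sum_erase_eq_of_pattern c h₁ h₂ hQ S]
  change permCov n (fun π => ∑ i ∈ S, ∑ j ∈ S.erase i, K (π i) (π j)) _ = _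
  simp only [permCov_sum_left, c]

theorem permCov_pairSum_add_pairSum_compl_eval_eq_zero (K : Fin n → Fin n → ℝ) (g : Fin n → ℝ)
    {S : Finset (Fin n)} (hS : 2 ≤ #S) (hSc : 2 ≤ #Sᶜ) (k : Fin n) :
    permCov n (fun π => (#S - 1 : ℝ)⁻¹ * pairSum K S π + (#Sᶜ - 1 : ℝ)⁻¹ * pairSum K Sᶜ π)
      (fun π => g (π k)) = 0 := by
  have hcard : #S + #Sᶜ = n := by rw [card_add_card_compl, Fintype.card_fin]
  obtain ⟨P, Q, hcov⟩ := exists_permCov_pairSum_eval K g k (by omega)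
  have hconst : pairSum K univ = fun _ => pairSum K univ 1 :=
    funext fun π => by rw [pairSum_univ, pairSum_univ]
  have hPQ : P + (#S + #Sᶜ - 2) * Q = 0 := by
    have huniv := hcov univ
    rw [hconst, permCov_const_left, if_pos (mem_univ k), card_univ, Fintype.card_fin,
      ← hcard] at huniv
    have : ((#S + #Sᶜ : ℕ) : ℝ) - 1 ≠ 0 := by
      rw [sub_ne_zero]; exact_mod_cast (by omega : #S + #Sᶜ ≠ 1)
    push_cast at huniv this
    exact (mul_eq_zero.1 huniv.symm).resolve_left this
  have hS1 : (#S : ℝ) - 1 ≠ 0 := by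
    rw [sub_ne_zero]; exact_mod_cast (by omega : #S ≠ 1)
  have hSc1 : (#Sᶜ : ℝ) - 1 ≠ 0 := by
    rw [sub_ne_zero]; exact_mod_cast (by omega : #Sᶜ ≠ 1)
  rw [permCov_add_left, permCov_const_mul_left, permCov_const_mul_left, hcov, hcov]
  by_cases hk : k ∈ S
  · rw [if_pos hk, if_neg (fun h => mem_compl.1 h hk)]
    field_simp
    linear_combination hPQ
  · rw [if_neg hk, if_pos (mem_compl.2 hk)]
    field_simp
    linear_combination hPQ

def initialSegment (n t : ℕ) : Finset (Fin n) := {i | (i : ℕ) < t}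

theorem card_initialSegment {t : ℕ} (h : t ≤ n) : #(initialSegment n t) = t := by
  rw [initialSegment, Fin.card_filter_val_lt, min_eq_right h]

theorem alphaStat_eq_pairSum (t : ℕ) (K : Fin n → Fin n → ℝ) (π : Equiv.Perm (Fin n)) :
    alphaStat n t K π = ((t : ℝ) * (t - 1))⁻¹ * pairSum K (initialSegment n t) π := by
  simp [alphaStat, pairSum, sum_sum_erase_eq_sum_sum_ite, initialSegment]

theorem betaStat_eq_pairSum (t : ℕ) (K : Fin n → Fin n → ℝ) (π : Equiv.Perm (Fin n)) :
    betaStat n t K π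
      = (((n : ℝ) - t) * (n - t - 1))⁻¹ * pairSum K (initialSegment n t)ᶜ π := by
  simp [betaStat, pairSum, sum_sum_erase_eq_sum_sum_ite, initialSegment]

theorem Wstat_eq_pairSum {t : ℕ} (ht : 0 < t) (htn : t < n) (K : Fin n → Fin n → ℝ)
    (π : Equiv.Perm (Fin n)) :
    Wstat n t K π = (n : ℝ)⁻¹ * (((t : ℝ) - 1)⁻¹ * pairSum K (initialSegment n t) π
      + ((n : ℝ) - t - 1)⁻¹ * pairSum K (initialSegment n t)ᶜ π) := by
  have ht0 : (t : ℝ) ≠ 0 := by positivity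
  have hnt : (n : ℝ) - t ≠ 0 := sub_ne_zero.2 (by exact_mod_cast htn.ne')
  rw [Wstat, alphaStat_eq_pairSum, betaStat_eq_pairSum, mul_inv, mul_inv]
  field_simp

theorem Dstat_eq_sum_symRowSum {t : ℕ} (ht : 2 ≤ t) (htn : t + 2 ≤ n) (K : Fin n → Fin n → ℝ)
    (π : Equiv.Perm (Fin n)) :
    Dstat n t K π = ∑ k, (if k ∈ initialSegment n t then 1 else -1)
      / (2 * n * (n - 1) : ℝ) * symRowSum K (π k) := by
  have ht0 : (t : ℝ) * (t - 1) ≠ 0 := by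
    have : (2 : ℝ) ≤ t := by exact_mod_cast ht
    exact mul_ne_zero (by positivity) (by linarith)
  have hnt : ((n : ℝ) - t) * (n - t - 1) ≠ 0 := by
    have : (t : ℝ) + 2 ≤ n := by exact_mod_cast htn
    exact mul_ne_zero (by linarith) (by linarith)
  calc Dstat n t K π
      = (pairSum K (initialSegment n t) π - pairSum K (initialSegment n t)ᶜ π)
          / (n * (n - 1)) := by
        rw [Dstat, alphaStat_eq_pairSum, betaStat_eq_pairSum, div_mul_eq_mul_div,
          div_mul_eq_mul_div, ← mul_assoc, ← mul_assoc, mul_inv_cancel₀ ht0, mul_inv_cancel₀ hnt,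
          one_mul, one_mul, sub_div]
    _ = 2 * (pairSum K (initialSegment n t) π - pairSum K (initialSegment n t)ᶜ π)
          / (2 * n * (n - 1)) := by
        rw [mul_assoc 2, mul_div_mul_left _ _ two_ne_zero]
    _ = _ := by
        rw [two_mul_sub_pairSum_compl, sum_div]
        simp only [div_mul_eq_mul_div]

end

theorem cov_W1_D2_zero_general (n t : ℕ) (ht : 4 ≤ t) (htn : t + 4 ≤ n)
    (K₁ K₂ : Fin n → Fin n → ℝ) :
    permExp n (fun π => Wstat n t K₁ π * Dstat n t K₂ π)
      - permExp n (Wstat n t K₁) * permExp n (Dstat n t K₂) = 0 := by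
  set A := initialSegment n t
  have hA : #A = t := card_initialSegment (by omega)
  have hAc : #Aᶜ = n - t := by rw [card_compl, Fintype.card_fin, hA]
  change permCov n (Wstat n t K₁) (Dstat n t K₂) = 0
  rw [funext (Wstat_eq_pairSum (by omega) (by omega) K₁),
    funext (Dstat_eq_sum_symRowSum (by omega) (by omega) K₂), permCov_sum_right]
  refine sum_eq_zero fun k _ => ?_
  have hcov := permCov_pairSum_add_pairSum_compl_eval_eq_zero K₁
    (fun a => (if k ∈ A then 1 else -1) / (2 * n * (n - 1) : ℝ) * symRowSum K₂ a)
    (S := A) (by omega) (by omega) k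
  rw [hA, hAc, Nat.cast_sub (by omega)] at hcov
  rw [permCov_const_mul_left, hcov, mul_zero]

theorem cov_W1_D2_zero (n t : ℕ) (ht : 4 ≤ t) (htn : t + 4 ≤ n)
    (K₁ K₂ : Fin n → Fin n → ℝ)
    (hsymm₁ : ∀ i j, K₁ i j = K₁ j i) (hdiag₁ : ∀ i, K₁ i i = 0)
    (hsymm₂ : ∀ i j, K₂ i j = K₂ j i) (hdiag₂ : ∀ i, K₂ i i = 0) :
    permExp n (fun π => Wstat n t K₁ π * Dstat n t K₂ π)
      - permExp n (Wstat n t K₁) * permExp n (Dstat n t K₂) = 0 :=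
  cov_W1_D2_zero_general n t ht htn K₁ K₂
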